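/- arXiv:2409.05729 — 3 statements merged into one kernel-verified Lean document; each statement's English description precedes it below -/
import Mathlib

section
/- Suppose max_{S∈𝕊} λ_S < ∞ and max_{S∈𝕊} sup_{x_S} r̄_S(x_S) < ∞, let α*_𝕊 be the minimiser of L over H_𝕊, set θ = E[a(X)] and α* = a − θ − ∑_{S∈𝕊} α*_S. Then the minimal value of the objective satisfies L(α*_𝕊) = E[ α*(X) a(X) ] = E[ α*(X)² ] + ∑_{S∈𝕊} (1/λ_S) E[ α*_S(X_S)² / r̄_S(X_S) ]. -/
/-!
Perturbing the minimiser in one direction, `α*_S ↦ (1 + t) α*_S`, changes `L` by a quadratic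
in `t` with linear coefficient `2 (E[α*_S² / (λ_S r̄_S)] - Cov(a - ∑_T α*_T, α*_S))`, so
minimality forces this to vanish. Summing these first-order conditions over `S` turns the
penalty into `Cov(a - ∑_T α*_T, ∑_T α*_T)`, hence `L(α*_𝕊) = Cov(a - ∑_T α*_T, a)`, which is
`E[α* a]` because `α*` is centred. The second identity only rewrites `Var(a - ∑_T α*_T)` as
`E[α*²]`.
-/

open MeasureTheory ProbabilityTheory

/-- `g` depends only on the coordinates in `S`. -/
def DependsOnCoords {d : ℕ} (S : Finset (Fin d)) (g : (Fin d → ℝ) → ℝ) : Prop :=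
  ∀ x y : Fin d → ℝ, (∀ i ∈ S, x i = y i) → g x = g y

/-- Membership in `H_S`. -/
def MemH {d : ℕ} (μ : Measure (Fin d → ℝ)) (S : Finset (Fin d))
    (g : (Fin d → ℝ) → ℝ) : Prop :=
  MemLp g 2 μ ∧ DependsOnCoords S g ∧ ∫ x, g x ∂μ = 0

/-- The objective functional `L`. -/
noncomputable def objective {d : ℕ} (μ : Measure (Fin d → ℝ))
    (𝕊 : Finset (Finset (Fin d))) (lam : Finset (Fin d) → ℝ)
    (r : Finset (Fin d) → (Fin d → ℝ) → ℝ) (a : (Fin d → ℝ) → ℝ)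
    (α : Finset (Fin d) → (Fin d → ℝ) → ℝ) : ℝ :=
  variance (fun x => a x - ∑ S ∈ 𝕊, α S x) μ
    + ∑ S ∈ 𝕊, ∫ x, (α S x) ^ 2 / (lam S * r S x) ∂μ

open Function

theorem Finset.sum_apply_update_of_mem {ι α M : Type*} [DecidableEq ι] [AddCommGroup M]
    {s : Finset ι} {i : ι} (h : i ∈ s) (g : ι → α → M) (f : ι → α) (b : α) :
    ∑ j ∈ s, g j (update f i b j) = ∑ j ∈ s, g j (f j) + (g i b - g i (f i)) := by
  simp_rw [apply_update g f i b, Finset.sum_update_of_mem h,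
    Finset.sum_eq_add_sum_sdiff_singleton_of_mem h (fun j => g j (f j))]
  abel

lemma eq_zero_of_forall_quadratic_nonneg {a b : ℝ} (h : ∀ t : ℝ, 0 ≤ a * t ^ 2 + b * t) :
    b = 0 := by
  have hdiscrim : discrim a b 0 ≤ 0 := discrim_le_zero fun t => by simpa [sq] using h t
  rw [discrim, mul_zero, sub_zero] at hdiscrim
  nlinarith [sq_nonneg b]

section ProbabilitySpace

variable {Ω : Type*} [MeasurableSpace Ω] {μ : Measure Ω}

lemma integral_sq_eq_variance_of_integral_eq_zero {X : Ω → ℝ} (hX : AEMeasurable X μ)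
    (hX0 : ∫ ω, X ω ∂μ = 0) : ∫ ω, X ω ^ 2 ∂μ = Var[X; μ] := by
  simp_rw [variance_eq_integral hX, hX0, sub_zero]

variable [IsProbabilityMeasure μ]

lemma integral_mul_eq_covariance_of_integral_eq_zero {X Y : Ω → ℝ} (hX : MemLp X 2 μ)
    (hY : MemLp Y 2 μ) (hX0 : ∫ ω, X ω ∂μ = 0) : ∫ ω, X ω * Y ω ∂μ = cov[X, Y; μ] := by
  rw [covariance_eq_sub hX hY, hX0, zero_mul, sub_zero]
  rfl

lemma integral_sub_integral_sub_sum_eq_zero {ι : Type*} {s : Finset ι} {Y : Ω → ℝ}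
    {X : ι → Ω → ℝ} (hY : Integrable Y μ) (hX : ∀ i ∈ s, Integrable (X i) μ)
    (hX0 : ∀ i ∈ s, ∫ ω, X i ω ∂μ = 0) :
    ∫ ω, (Y ω - ∫ ω', Y ω' ∂μ - ∑ i ∈ s, X i ω) ∂μ = 0 := by
  have hsum : Integrable (fun ω => ∑ i ∈ s, X i ω) μ := integrable_finsetSum s hX
  rw [integral_sub (by fun_prop) hsum, integral_sub hY (integrable_const _),
    integral_finsetSum s hX, Finset.sum_eq_zero hX0]
  simp

end ProbabilitySpace

lemma MemH.const_mul {d : ℕ} {μ : Measure (Fin d → ℝ)} {S : Finset (Fin d)}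
    {g : (Fin d → ℝ) → ℝ} (hg : MemH μ S g) (c : ℝ) : MemH μ S (fun x => c * g x) := by
  obtain ⟨hg2, hgdep, hg0⟩ := hg
  refine ⟨hg2.const_mul c, fun x y hxy => congrArg (c * ·) (hgdep x y hxy), ?_⟩
  rw [integral_const_mul, hg0, mul_zero]

section Objective

variable {d : ℕ} {μ : Measure (Fin d → ℝ)} [IsProbabilityMeasure μ]
  {𝕊 : Finset (Finset (Fin d))} {lam : Finset (Fin d) → ℝ}
  {r : Finset (Fin d) → (Fin d → ℝ) → ℝ} {a : (Fin d → ℝ) → ℝ}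
  {α : Finset (Fin d) → (Fin d → ℝ) → ℝ}

lemma objective_update_one_add_mul (ha : MemLp a 2 μ) (hα : ∀ S ∈ 𝕊, MemLp (α S) 2 μ)
    {S₀ : Finset (Fin d)} (hS₀ : S₀ ∈ 𝕊) (t : ℝ) :
    objective μ 𝕊 lam r a (update α S₀ fun x => (1 + t) * α S₀ x) =
      objective μ 𝕊 lam r a α
        + (Var[α S₀; μ] + ∫ x, α S₀ x ^ 2 / (lam S₀ * r S₀ x) ∂μ) * t ^ 2
        + 2 * ((∫ x, α S₀ x ^ 2 / (lam S₀ * r S₀ x) ∂μ)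
            - cov[fun x => a x - ∑ S ∈ 𝕊, α S x, α S₀; μ]) * t := by
  have hresidual : (fun x => a x - ∑ S ∈ 𝕊, update α S₀ (fun x => (1 + t) * α S₀ x) S x)
      = fun x => (a x - ∑ S ∈ 𝕊, α S x) - t * α S₀ x := by
    funext x
    have hsum := Finset.sum_apply_update_of_mem hS₀ (fun _ f => f x) α
      (fun x => (1 + t) * α S₀ x)
    simp only at hsum
    rw [hsum]
    ring
  have hpenalty := Finset.sum_apply_update_of_mem hS₀
    (fun S f => ∫ x, f x ^ 2 / (lam S * r S x) ∂μ) α (fun x => (1 + t) * α S₀ x)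
  have hscale : ∫ x, ((1 + t) * α S₀ x) ^ 2 / (lam S₀ * r S₀ x) ∂μ
      = (1 + t) ^ 2 * ∫ x, α S₀ x ^ 2 / (lam S₀ * r S₀ x) ∂μ := by
    simp_rw [mul_pow, mul_div_assoc, integral_const_mul]
  have hmemLp : MemLp (fun x => a x - ∑ S ∈ 𝕊, α S x) 2 μ := ha.sub (memLp_finsetSum 𝕊 hα)
  simp only [objective]
  rw [hresidual, hpenalty, hscale, variance_fun_sub hmemLp ((hα S₀ hS₀).const_mul t),
    covariance_const_mul_right, variance_const_mul]
  ring

lemma covariance_residual_eq_of_isMinOn (ha : MemLp a 2 μ) (hα : ∀ S ∈ 𝕊, MemH μ S (α S))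
    (hmin : IsMinOn (objective μ 𝕊 lam r a) {β | ∀ S ∈ 𝕊, MemH μ S (β S)} α)
    {S₀ : Finset (Fin d)} (hS₀ : S₀ ∈ 𝕊) :
    cov[fun x => a x - ∑ S ∈ 𝕊, α S x, α S₀; μ] = ∫ x, α S₀ x ^ 2 / (lam S₀ * r S₀ x) ∂μ := by
  have hperturb (t : ℝ) : ∀ S ∈ 𝕊, MemH μ S (update α S₀ (fun x => (1 + t) * α S₀ x) S) := by
    intro S hS
    rcases eq_or_ne S S₀ with rfl | hne
    · simpa using (hα S hS).const_mul (1 + t)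
    · simpa [update_of_ne hne] using hα S hS
  set J := ∫ x, α S₀ x ^ 2 / (lam S₀ * r S₀ x) ∂μ
  set c := cov[fun x => a x - ∑ S ∈ 𝕊, α S x, α S₀; μ]
  have hlinear := eq_zero_of_forall_quadratic_nonneg (a := Var[α S₀; μ] + J) (b := 2 * (J - c))
    fun t => by
      have := isMinOn_iff.1 hmin _ (hperturb t)
      rw [objective_update_one_add_mul ha (fun S hS => (hα S hS).1) hS₀ t] at this
      linarith
  linarith

lemma objective_eq_covariance_of_isMinOn (ha : MemLp a 2 μ) (hα : ∀ S ∈ 𝕊, MemH μ S (α S))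
    (hmin : IsMinOn (objective μ 𝕊 lam r a) {β | ∀ S ∈ 𝕊, MemH μ S (β S)} α) :
    objective μ 𝕊 lam r a α = cov[fun x => a x - ∑ S ∈ 𝕊, α S x, a; μ] := by
  have hα2 : ∀ S ∈ 𝕊, MemLp (α S) 2 μ := fun S hS => (hα S hS).1
  have hsum2 : MemLp (fun x => ∑ S ∈ 𝕊, α S x) 2 μ := memLp_finsetSum 𝕊 hα2
  have hresidual2 : MemLp (fun x => a x - ∑ S ∈ 𝕊, α S x) 2 μ := ha.sub hsum2
  calc objective μ 𝕊 lam r a α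
      = Var[fun x => a x - ∑ S ∈ 𝕊, α S x; μ]
          + ∑ S ∈ 𝕊, cov[fun x => a x - ∑ S ∈ 𝕊, α S x, α S; μ] := by
        rw [objective, Finset.sum_congr rfl fun S hS =>
          covariance_residual_eq_of_isMinOn ha hα hmin hS]
    _ = cov[fun x => a x - ∑ S ∈ 𝕊, α S x,
          (fun x => a x - ∑ S ∈ 𝕊, α S x) + fun x => ∑ S ∈ 𝕊, α S x; μ] := by
        rw [covariance_add_right hresidual2 hresidual2 hsum2,
          covariance_fun_sum_right' hα2 hresidual2, covariance_self hresidual2.aemeasurable]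
    _ = cov[fun x => a x - ∑ S ∈ 𝕊, α S x, a; μ] := by
        congr 1
        funext x
        simp

end Objective

theorem minimal_objective_value_general
    (d : ℕ)
    (μ : Measure (Fin d → ℝ)) [IsProbabilityMeasure μ]
    (𝕊 : Finset (Finset (Fin d)))
    (lam : Finset (Fin d) → ℝ)
    (r : Finset (Fin d) → (Fin d → ℝ) → ℝ)
    (a : (Fin d → ℝ) → ℝ) (ha : MemLp a 2 μ)
    (αstar : Finset (Fin d) → (Fin d → ℝ) → ℝ)
    (hαstarH : ∀ S ∈ 𝕊, MemH μ S (αstar S))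
    (hαstarMin : ∀ β : Finset (Fin d) → (Fin d → ℝ) → ℝ,
      (∀ S ∈ 𝕊, MemH μ S (β S)) →
      objective μ 𝕊 lam r a αstar ≤ objective μ 𝕊 lam r a β) :
    objective μ 𝕊 lam r a αstar
        = ∫ x, (a x - (∫ y, a y ∂μ) - ∑ S ∈ 𝕊, αstar S x) * a x ∂μ ∧
    objective μ 𝕊 lam r a αstar
        = (∫ x, (a x - (∫ y, a y ∂μ) - ∑ S ∈ 𝕊, αstar S x) ^ 2 ∂μ)
          + ∑ S ∈ 𝕊, (lam S)⁻¹ * ∫ x, (αstar S x) ^ 2 / r S x ∂μ := by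
  have hα2 : ∀ S ∈ 𝕊, MemLp (αstar S) 2 μ := fun S hS => (hαstarH S hS).1
  have hresidual2 : MemLp (fun x => a x - ∑ S ∈ 𝕊, αstar S x) 2 μ :=
    ha.sub (memLp_finsetSum 𝕊 hα2)
  have hcentred0 : ∫ x, (a x - (∫ y, a y ∂μ) - ∑ S ∈ 𝕊, αstar S x) ∂μ = 0 :=
    integral_sub_integral_sub_sum_eq_zero (ha.integrable one_le_two)
      (fun S hS => (hα2 S hS).integrable one_le_two) fun S hS => (hαstarH S hS).2.2
  have hcentred : (fun x => a x - (∫ y, a y ∂μ) - ∑ S ∈ 𝕊, αstar S x)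
      = fun x => (a x - ∑ S ∈ 𝕊, αstar S x) - ∫ y, a y ∂μ := by
    funext x; ring
  have hcentred2 : MemLp (fun x => a x - (∫ y, a y ∂μ) - ∑ S ∈ 𝕊, αstar S x) 2 μ := by
    rw [hcentred]
    exact hresidual2.sub (memLp_const _)
  constructor
  · rw [integral_mul_eq_covariance_of_integral_eq_zero hcentred2 ha hcentred0, hcentred,
      covariance_sub_const_left (hresidual2.integrable one_le_two),
      objective_eq_covariance_of_isMinOn ha hαstarH (isMinOn_iff.2 hαstarMin)]
  · rw [integral_sq_eq_variance_of_integral_eq_zero hcentred2.aemeasurable hcentred0, hcentred,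
      variance_sub_const hresidual2.aestronglyMeasurable, objective]
    congr 1
    refine Finset.sum_congr rfl fun S _ => ?_
    simp_rw [mul_comm (lam S), ← div_div, div_eq_inv_mul _ (lam S), integral_const_mul]

/-- The minimal value of the objective:
`L(α*_𝕊) = E[α*(X) a(X)] = E[α*(X)²] + ∑_S λ_S⁻¹ E[α*_S(X_S)²/r̄_S(X_S)]`,
where `α* = a − θ − ∑_S α*_S`. -/
theorem minimal_objective_value
    (d : ℕ) (hd : 2 ≤ d)
    (μ : Measure (Fin d → ℝ)) [IsProbabilityMeasure μ]
    (𝕊 : Finset (Finset (Fin d))) (h𝕊ne : 𝕊.Nonempty)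
    (h𝕊proper : ∀ S ∈ 𝕊, S ≠ Finset.univ)
    (lam : Finset (Fin d) → ℝ) (hlam : ∀ S ∈ 𝕊, 0 < lam S)
    (r : Finset (Fin d) → (Fin d → ℝ) → ℝ)
    (hrpos : ∀ S ∈ 𝕊, ∀ x, 0 < r S x)
    (hrdep : ∀ S ∈ 𝕊, DependsOnCoords S (r S))
    (hrmeas : ∀ S ∈ 𝕊, Measurable (r S))
    (hrint : ∀ S ∈ 𝕊, ∫ x, r S x ∂μ = 1)
    (C : ℝ) (hrC : ∀ S ∈ 𝕊, ∀ x, r S x ≤ C)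
    (a : (Fin d → ℝ) → ℝ) (ha : MemLp a 2 μ)
    (αstar : Finset (Fin d) → (Fin d → ℝ) → ℝ)
    (hαstarH : ∀ S ∈ 𝕊, MemH μ S (αstar S))
    (hαstarMin : ∀ β : Finset (Fin d) → (Fin d → ℝ) → ℝ,
      (∀ S ∈ 𝕊, MemH μ S (β S)) →
      objective μ 𝕊 lam r a αstar ≤ objective μ 𝕊 lam r a β) :
    objective μ 𝕊 lam r a αstar
        = ∫ x, (a x - (∫ y, a y ∂μ) - ∑ S ∈ 𝕊, αstar S x) * a x ∂μ ∧
    objective μ 𝕊 lam r a αstar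
        = (∫ x, (a x - (∫ y, a y ∂μ) - ∑ S ∈ 𝕊, αstar S x) ^ 2 ∂μ)
          + ∑ S ∈ 𝕊, (lam S)⁻¹ * ∫ x, (αstar S x) ^ 2 / r S x ∂μ :=
  minimal_objective_value_general d μ 𝕊 lam r a ha αstar hαstarH hαstarMin
end

section
/- Let X₁,…,X_n be i.i.d. with density f and, independently, for each S ∈ 𝕊 let X_{S,1},…,X_{S,n_S} be i.i.d. on ℝ^S with density r̄_S f_S, all samples mutually independent. Suppose a is bounded, 0 < c ≤ r̄_S ≤ C < ∞ for all S ∈ 𝕊, and max_{S∈𝕊} λ_S < ∞. Define the oracle estimator θ*^{(M)} = (1/n) ∑_{i=1}^{n} { a(X_i) − ∑_{S∈𝕊} α_S^{(M)}(X_i) } + ∑_{S∈𝕊} (1/n_S) ∑_{j=1}^{n_S} α_S^{(M)}(X_{S,j}) / r̄_S(X_{S,j}). Then θ*^{(M)} is an unbiased estimator of θ = E[a(X)], and n · Var(θ*^{(M)}) ≤ (1 + max_{S∈𝕊} | n λ_S / n_S − 1 |) · L(α_𝕊^{(M)}). -/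
open MeasureTheory ProbabilityTheory

/-- The weight `λ_S r̄_S(x_S) / (1 + λ_S r̄_S(x_S))`. -/
noncomputable def wgt {d : ℕ} (lam : Finset (Fin d) → ℝ)
    (r : Finset (Fin d) → (Fin d → ℝ) → ℝ) (S : Finset (Fin d)) (x : Fin d → ℝ) : ℝ :=
  lam S * r S x / (1 + lam S * r S x)

/-- The iterated shifted conditional expectations `ā_Ss^{(m)}`, built from the
conditional-law kernels `K S` (so that `E[g(X) | X_S = x_S] = ∫ g d(K S x)`):
`ā_∅^{(0)} = a` and
`ā_{(Ss,S)}^{(m+1)}(x) = w_S(x) (E[ā_Ss^{(m)}(X) | X_S = x_S] − θ̄_{(Ss,S)}^{(m+1)})`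
with `θ̄_{(Ss,S)}^{(m+1)} = ∫ w_S ā_Ss^{(m)} dμ / ∫ w_S dμ`. -/
noncomputable def abarF {d : ℕ} (μ : Measure (Fin d → ℝ))
    (K : Finset (Fin d) → Kernel (Fin d → ℝ) (Fin d → ℝ))
    (lam : Finset (Fin d) → ℝ) (r : Finset (Fin d) → (Fin d → ℝ) → ℝ)
    (a : (Fin d → ℝ) → ℝ) :
    (m : ℕ) → (Fin m → Finset (Fin d)) → (Fin d → ℝ) → ℝ
  | 0, _ => a
  | m + 1, Ss => fun x =>
      wgt lam r (Ss (Fin.last m)) x *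
        ((∫ y, abarF μ K lam r a m (fun j => Ss j.castSucc) y ∂((K (Ss (Fin.last m))) x))
          - (∫ x', wgt lam r (Ss (Fin.last m)) x'
                * abarF μ K lam r a m (fun j => Ss j.castSucc) x' ∂μ)
            / (∫ x', wgt lam r (Ss (Fin.last m)) x' ∂μ))

/-- `Ss ∈ 𝕊^{(m)}`: all entries lie in `𝕊` and consecutive entries are distinct. -/
def ValidChain {d : ℕ} (𝕊 : Finset (Finset (Fin d))) (m : ℕ)
    (Ss : Fin m → Finset (Fin d)) : Prop :=
  (∀ j, Ss j ∈ 𝕊) ∧ ∀ j k : Fin m, (k : ℕ) = (j : ℕ) + 1 → Ss j ≠ Ss k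

instance {d : ℕ} (𝕊 : Finset (Finset (Fin d))) (m : ℕ) :
    DecidablePred (ValidChain 𝕊 m) := fun Ss => by
  unfold ValidChain; infer_instance

/-- The chains `Ss ∈ 𝕊^{(m)}` with `S_m = S`. -/
def chainsEndAt {d : ℕ} (𝕊 : Finset (Finset (Fin d))) (m : ℕ) (S : Finset (Fin d)) :
    Finset (Fin m → Finset (Fin d)) :=
  Finset.univ.filter fun Ss =>
    ValidChain 𝕊 m Ss ∧ ∀ j : Fin m, (j : ℕ) = m - 1 → Ss j = S

/-- `b_{M,η}(m) = P(B ≥ m)` for `B ~ Bin(M, η)`. -/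
noncomputable def bProb (M : ℕ) (η : ℝ) (m : ℕ) : ℝ :=
  ∑ i ∈ Finset.Icc m M, (M.choose i : ℝ) * η ^ i * (1 - η) ^ (M - i)

/-- The approximate influence-function components
`α_S^{(M)} = ∑_{m=1}^M (−1)^{m−1} ∑_{Ss ∈ 𝕊^{(m)} : S_m = S} b_{M,η}(m) ā_Ss^{(m)}`
with step size `η = 1/|𝕊|`. -/
noncomputable def alphaM {d : ℕ} (μ : Measure (Fin d → ℝ))
    (K : Finset (Fin d) → Kernel (Fin d → ℝ) (Fin d → ℝ))
    (𝕊 : Finset (Finset (Fin d))) (lam : Finset (Fin d) → ℝ)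
    (r : Finset (Fin d) → (Fin d → ℝ) → ℝ) (a : (Fin d → ℝ) → ℝ)
    (M : ℕ) (S : Finset (Fin d)) (x : Fin d → ℝ) : ℝ :=
  ∑ m ∈ Finset.Icc 1 M, (-1 : ℝ) ^ (m - 1) * bProb M ((𝕊.card : ℝ))⁻¹ m *
    ∑ Ss ∈ chainsEndAt 𝕊 m S, abarF μ K lam r a m Ss x

/-!
The estimator is a sum of independent terms `n⁻¹ (a - ∑ α_S)(X_i)` and
`n_S⁻¹ (α_S / r̄_S)(X_{S,j})`. Since `X_{S,j}` has density `r̄_S` with respect to the law of `X`,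
`E[(α_S / r̄_S)(X_{S,j})] = E[α_S(X)]`, so the `α_S` cancel in expectation; and
`Var[(α_S / r̄_S)(X_{S,j})] ≤ E[α_S(X)² / r̄_S(X)] = λ_S E[α_S(X)² / (λ_S r̄_S(X))]`, so
`n Var θ* ≤ Var(a - ∑ α_S) + ∑ (n λ_S / n_S) E[α_S² / (λ_S r̄_S)]`, and
`n λ_S / n_S ≤ 1 + max_S |n λ_S / n_S - 1|`. Both arguments work for any bounded measurable `α`;
`α^{(M)}` is one because the weights `λ r̄ / (1 + λ r̄)` lie in `[0, 1]` and integrating against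
a Markov kernel preserves bounds.
-/

def BoundedMeasurable {E : Type*} [MeasurableSpace E] (f : E → ℝ) : Prop :=
  Measurable f ∧ ∃ C, ∀ x, |f x| ≤ C

namespace BoundedMeasurable

variable {E F : Type*} [MeasurableSpace E] [MeasurableSpace F] {f g : E → ℝ}

lemma const (c : ℝ) : BoundedMeasurable fun _ : E => c :=
  ⟨measurable_const, |c|, fun _ => le_rfl⟩

lemma add (hf : BoundedMeasurable f) (hg : BoundedMeasurable g) :
    BoundedMeasurable fun x => f x + g x := by
  obtain ⟨hfm, Cf, hCf⟩ := hf
  obtain ⟨hgm, Cg, hCg⟩ := hg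
  exact ⟨hfm.add hgm, Cf + Cg, fun x => (abs_add_le _ _).trans (add_le_add (hCf x) (hCg x))⟩

lemma sub (hf : BoundedMeasurable f) (hg : BoundedMeasurable g) :
    BoundedMeasurable fun x => f x - g x := by
  obtain ⟨hfm, Cf, hCf⟩ := hf
  obtain ⟨hgm, Cg, hCg⟩ := hg
  exact ⟨hfm.sub hgm, Cf + Cg, fun x => (abs_sub _ _).trans (add_le_add (hCf x) (hCg x))⟩

lemma mul (hf : BoundedMeasurable f) (hg : BoundedMeasurable g) :
    BoundedMeasurable fun x => f x * g x := by
  obtain ⟨hfm, Cf, hCf⟩ := hf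
  obtain ⟨hgm, Cg, hCg⟩ := hg
  refine ⟨hfm.mul hgm, Cf * Cg, fun x => ?_⟩
  rw [abs_mul]
  exact mul_le_mul (hCf x) (hCg x) (abs_nonneg _) ((abs_nonneg _).trans (hCf x))

lemma div (hf : BoundedMeasurable f) (hg : Measurable g) {c : ℝ} (hc : 0 < c)
    (hgc : ∀ x, c ≤ g x) : BoundedMeasurable fun x => f x / g x := by
  have hinv : BoundedMeasurable fun x => (g x)⁻¹ := by
    refine ⟨hg.inv, c⁻¹, fun x => ?_⟩
    rw [abs_inv, abs_of_pos (hc.trans_le (hgc x))]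
    exact inv_anti₀ hc (hgc x)
  simpa only [div_eq_mul_inv] using hf.mul hinv

lemma finset_sum {ι : Type*} (s : Finset ι) {f : ι → E → ℝ}
    (hf : ∀ i ∈ s, BoundedMeasurable (f i)) : BoundedMeasurable fun x => ∑ i ∈ s, f i x := by
  simp only [← Finset.sum_apply]
  exact Finset.sum_induction f BoundedMeasurable (fun _ _ => add) (const 0) hf

lemma comp (hf : BoundedMeasurable f) {φ : F → E} (hφ : Measurable φ) :
    BoundedMeasurable fun y => f (φ y) :=
  ⟨hf.1.comp hφ, hf.2.imp fun _ hC y => hC (φ y)⟩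

lemma memLp (hf : BoundedMeasurable f) (p : ENNReal) (μ : Measure E) [IsFiniteMeasure μ] :
    MemLp f p μ :=
  let ⟨hfm, C, hC⟩ := hf
  .of_bound hfm.aestronglyMeasurable C (ae_of_all _ hC)

lemma integrable (hf : BoundedMeasurable f) (μ : Measure E) [IsFiniteMeasure μ] :
    Integrable f μ :=
  memLp_one_iff_integrable.mp (hf.memLp 1 μ)

lemma integral_kernel (hf : BoundedMeasurable f) (κ : Kernel F E) [IsMarkovKernel κ] :
    BoundedMeasurable fun y => ∫ x, f x ∂κ y := by
  obtain ⟨hfm, C, hC⟩ := hf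
  have huncurry : StronglyMeasurable (Function.uncurry fun (_ : F) x => f x) :=
    (hfm.comp measurable_snd).stronglyMeasurable
  refine ⟨huncurry.integral_kernel_prod_right.measurable, C, fun y => ?_⟩
  simpa using norm_integral_le_of_norm_le_const (μ := κ y) (f := f) (ae_of_all _ hC)

end BoundedMeasurable

section InfluenceComponents

variable {d : ℕ} {μ : Measure (Fin d → ℝ)} {K : Finset (Fin d) → Kernel (Fin d → ℝ) (Fin d → ℝ)}
  {𝕊 : Finset (Finset (Fin d))} {lam : Finset (Fin d) → ℝ}
  {r : Finset (Fin d) → (Fin d → ℝ) → ℝ} {a : (Fin d → ℝ) → ℝ}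

lemma wgt_boundedMeasurable {S : Finset (Fin d)} (hlam : 0 ≤ lam S) (hr : Measurable (r S))
    (hr0 : ∀ x, 0 ≤ r S x) : BoundedMeasurable (wgt lam r S) := by
  refine ⟨(measurable_const.mul hr).div (measurable_const.add (measurable_const.mul hr)), 1,
    fun x => ?_⟩
  have ht : 0 ≤ lam S * r S x := mul_nonneg hlam (hr0 x)
  rw [wgt, abs_of_nonneg (by positivity), div_le_one (by positivity)]
  linarith

lemma abarF_boundedMeasurable (hK : ∀ S ∈ 𝕊, IsMarkovKernel (K S))
    (hw : ∀ S ∈ 𝕊, BoundedMeasurable (wgt lam r S)) (ha : BoundedMeasurable a) :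
    ∀ m (Ss : Fin m → Finset (Fin d)), (∀ j, Ss j ∈ 𝕊) →
      BoundedMeasurable (abarF μ K lam r a m Ss)
  | 0, _, _ => ha
  | m + 1, Ss, hSs => by
    have := hK _ (hSs (Fin.last m))
    have hprev := abarF_boundedMeasurable hK hw ha m (fun j => Ss j.castSucc) fun j => hSs _
    exact (hw _ (hSs _)).mul ((hprev.integral_kernel _).sub (.const _))

lemma alphaM_boundedMeasurable (hK : ∀ S ∈ 𝕊, IsMarkovKernel (K S))
    (hw : ∀ S ∈ 𝕊, BoundedMeasurable (wgt lam r S)) (ha : BoundedMeasurable a)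
    (M : ℕ) (S : Finset (Fin d)) : BoundedMeasurable (alphaM μ K 𝕊 lam r a M S) :=
  .finset_sum _ fun m _ => (BoundedMeasurable.const _).mul <| .finset_sum _ fun Ss hSs =>
    abarF_boundedMeasurable hK hw ha m Ss (Finset.mem_filter.mp hSs).2.1.1

end InfluenceComponents

section SumOfComponents

variable {E Ω κ : Type*} [MeasurableSpace E] [MeasurableSpace Ω] {P : Measure Ω}
  [IsFiniteMeasure P] [Fintype κ] {Y : κ → Ω → E} {F : κ → E → ℝ}

lemma integral_sum_comp_eq_sum_integral_map (hY : ∀ k, Measurable (Y k))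
    (hF : ∀ k, BoundedMeasurable (F k)) :
    ∫ ω, ∑ k, F k (Y k ω) ∂P = ∑ k, ∫ x, F k x ∂(P.map (Y k)) := by
  rw [integral_finsetSum _ fun k _ => ((hF k).comp (hY k)).integrable P]
  exact Finset.sum_congr rfl fun k _ =>
    (integral_map (hY k).aemeasurable (hF k).1.aestronglyMeasurable).symm

lemma ProbabilityTheory.iIndepFun.variance_sum_comp (hindep : iIndepFun Y P)
    (hY : ∀ k, Measurable (Y k)) (hF : ∀ k, BoundedMeasurable (F k)) :
    variance (fun ω => ∑ k, F k (Y k ω)) P = ∑ k, variance (F k) (P.map (Y k)) := by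
  have hZ := hindep.comp F fun k => (hF k).1
  rw [← Finset.sum_fn, IndepFun.variance_sum (fun k _ => ((hF k).comp (hY k)).memLp 2 P)
    fun k _ l _ hkl => hZ.indepFun hkl]
  exact Finset.sum_congr rfl fun k _ =>
    (variance_map (hF k).1.aemeasurable (hY k).aemeasurable).symm

end SumOfComponents

section PooledMean

variable {ι E Ω : Type*} (𝕊 : Finset ι) {n : ℕ} {nS : ι → ℕ}

lemma sum_sum_elim_sigma (u : ℝ) (v : ι → ℝ) :
    ∑ k : Fin n ⊕ Σ S : 𝕊, Fin (nS S), Sum.elim (fun _ => u) (fun p => v p.1) k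
      = n * u + ∑ S ∈ 𝕊, nS S * v S := by
  rw [Fintype.sum_sum_type, ← Finset.univ_sigma_univ, Finset.sum_sigma]
  simp [Finset.sum_attach 𝕊 fun S => (nS S : ℝ) * v S]

noncomputable def pooledMean (X : Fin n → Ω → E) (XS : (S : ι) → Fin (nS S) → Ω → E)
    (g : E → ℝ) (h : ι → E → ℝ) (ω : Ω) : ℝ :=
  (n : ℝ)⁻¹ * ∑ i, g (X i ω) + ∑ S ∈ 𝕊, (nS S : ℝ)⁻¹ * ∑ j, h S (XS S j ω)

def pooledSample (X : Fin n → Ω → E) (XS : (S : ι) → Fin (nS S) → Ω → E) :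
    Fin n ⊕ (Σ S : 𝕊, Fin (nS S)) → Ω → E :=
  Sum.elim X fun p => XS p.1 p.2

noncomputable def pooledTerm (g : E → ℝ) (h : ι → E → ℝ) :
    Fin n ⊕ (Σ S : 𝕊, Fin (nS S)) → E → ℝ :=
  Sum.elim (fun _ x => (n : ℝ)⁻¹ * g x) fun p x => (nS p.1 : ℝ)⁻¹ * h p.1 x

lemma pooledMean_eq_sum (X : Fin n → Ω → E) (XS : (S : ι) → Fin (nS S) → Ω → E)
    (g : E → ℝ) (h : ι → E → ℝ) :
    pooledMean 𝕊 X XS g h = fun ω => ∑ k, pooledTerm 𝕊 g h k (pooledSample 𝕊 X XS k ω) := by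
  ext ω
  rw [pooledMean, Fintype.sum_sum_type, ← Finset.univ_sigma_univ, Finset.sum_sigma]
  simp [pooledTerm, pooledSample, Finset.mul_sum,
    Finset.sum_attach 𝕊 fun S => ∑ j, (nS S : ℝ)⁻¹ * h S (XS S j ω)]

variable [MeasurableSpace E] [MeasurableSpace Ω] {P : Measure Ω} {X : Fin n → Ω → E}
  {XS : (S : ι) → Fin (nS S) → Ω → E} {g : E → ℝ} {h : ι → E → ℝ} {μ : Measure E}
  {ν : ι → Measure E}

lemma measurable_pooledSample (hX : ∀ i, Measurable (X i)) (hXS : ∀ S j, Measurable (XS S j))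
    (k : Fin n ⊕ Σ S : 𝕊, Fin (nS S)) : Measurable (pooledSample 𝕊 X XS k) := by
  rcases k with i | p
  exacts [hX i, hXS _ _]

lemma boundedMeasurable_pooledTerm (hg : BoundedMeasurable g)
    (hh : ∀ S ∈ 𝕊, BoundedMeasurable (h S)) (k : Fin n ⊕ Σ S : 𝕊, Fin (nS S)) :
    BoundedMeasurable (pooledTerm 𝕊 g h k) := by
  rcases k with i | p
  exacts [(BoundedMeasurable.const _).mul hg, (BoundedMeasurable.const _).mul (hh _ p.1.2)]

lemma integral_pooledMean [IsFiniteMeasure P] (hn : n ≠ 0) (hnS : ∀ S ∈ 𝕊, nS S ≠ 0)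
    (hX : ∀ i, Measurable (X i)) (hXS : ∀ S j, Measurable (XS S j))
    (hXlaw : ∀ i, P.map (X i) = μ) (hXSlaw : ∀ S ∈ 𝕊, ∀ j, P.map (XS S j) = ν S)
    (hg : BoundedMeasurable g) (hh : ∀ S ∈ 𝕊, BoundedMeasurable (h S)) :
    ∫ ω, pooledMean 𝕊 X XS g h ω ∂P = ∫ x, g x ∂μ + ∑ S ∈ 𝕊, ∫ x, h S x ∂ν S := by
  have hterm (k) : ∫ x, pooledTerm 𝕊 g h k x ∂P.map (pooledSample 𝕊 X XS k)
      = Sum.elim (fun _ => (n : ℝ)⁻¹ * ∫ x, g x ∂μ)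
          (fun p => (nS p.1 : ℝ)⁻¹ * ∫ x, h p.1 x ∂ν p.1) k := by
    rcases k with i | p
    · simp only [pooledTerm, pooledSample, Sum.elim_inl, hXlaw, integral_const_mul]
    · simp only [pooledTerm, pooledSample, Sum.elim_inr, hXSlaw _ p.1.2, integral_const_mul]
  simp only [pooledMean_eq_sum]
  rw [integral_sum_comp_eq_sum_integral_map
      (measurable_pooledSample 𝕊 hX hXS) (boundedMeasurable_pooledTerm 𝕊 hg hh),
    Finset.sum_congr rfl fun k _ => hterm k,
    sum_sum_elim_sigma 𝕊 _ fun S => (nS S : ℝ)⁻¹ * ∫ x, h S x ∂ν S,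
    mul_inv_cancel_left₀ (Nat.cast_ne_zero.2 hn)]
  congr 1
  exact Finset.sum_congr rfl fun S hS => mul_inv_cancel_left₀ (Nat.cast_ne_zero.2 (hnS S hS)) _

lemma variance_pooledMean [IsFiniteMeasure P] (hindep : iIndepFun (pooledSample 𝕊 X XS) P)
    (hX : ∀ i, Measurable (X i)) (hXS : ∀ S j, Measurable (XS S j))
    (hXlaw : ∀ i, P.map (X i) = μ) (hXSlaw : ∀ S ∈ 𝕊, ∀ j, P.map (XS S j) = ν S)
    (hg : BoundedMeasurable g) (hh : ∀ S ∈ 𝕊, BoundedMeasurable (h S)) :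
    variance (pooledMean 𝕊 X XS g h) P
      = (n : ℝ)⁻¹ * variance g μ + ∑ S ∈ 𝕊, (nS S : ℝ)⁻¹ * variance (h S) (ν S) := by
  have hterm (k) : variance (pooledTerm 𝕊 g h k) (P.map (pooledSample 𝕊 X XS k))
      = Sum.elim (fun _ => (n : ℝ)⁻¹ ^ 2 * variance g μ)
          (fun p => (nS p.1 : ℝ)⁻¹ ^ 2 * variance (h p.1) (ν p.1)) k := by
    rcases k with i | p
    · simp only [pooledTerm, pooledSample, Sum.elim_inl, hXlaw, variance_const_mul]
    · simp only [pooledTerm, pooledSample, Sum.elim_inr, hXSlaw _ p.1.2, variance_const_mul]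
  have mul_inv_sq (x : ℝ) : x * x⁻¹ ^ 2 = x⁻¹ := by
    rcases eq_or_ne x 0 with rfl | hx
    · simp
    · field_simp
  rw [pooledMean_eq_sum, hindep.variance_sum_comp (measurable_pooledSample 𝕊 hX hXS)
      (boundedMeasurable_pooledTerm 𝕊 hg hh),
    Finset.sum_congr rfl fun k _ => hterm k,
    sum_sum_elim_sigma 𝕊 _ fun S => (nS S : ℝ)⁻¹ ^ 2 * variance (h S) (ν S)]
  simp only [← mul_assoc, mul_inv_sq]

end PooledMean

section ImportanceWeighting

variable {E : Type*} [MeasurableSpace E] {μ : Measure E} {ρ : E → ℝ}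

lemma integral_withDensity_ofReal (hρ : Measurable ρ) (hρ0 : ∀ x, 0 ≤ ρ x) (φ : E → ℝ) :
    ∫ x, φ x ∂μ.withDensity (fun x => ENNReal.ofReal (ρ x)) = ∫ x, ρ x * φ x ∂μ := by
  rw [integral_withDensity_eq_integral_toReal_smul hρ.ennreal_ofReal
    (ae_of_all _ fun _ => ENNReal.ofReal_lt_top)]
  simp only [ENNReal.toReal_ofReal (hρ0 _), smul_eq_mul]

lemma integral_div_withDensity_ofReal (hρ : Measurable ρ) (hρ0 : ∀ x, 0 < ρ x) (f : E → ℝ) :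
    ∫ x, f x / ρ x ∂μ.withDensity (fun x => ENNReal.ofReal (ρ x)) = ∫ x, f x ∂μ := by
  rw [integral_withDensity_ofReal hρ fun x => (hρ0 x).le]
  exact integral_congr_ae (ae_of_all _ fun x => mul_div_cancel₀ _ (hρ0 x).ne')

lemma variance_div_withDensity_ofReal_le
    [IsProbabilityMeasure (μ.withDensity fun x => ENNReal.ofReal (ρ x))]
    (hρ : Measurable ρ) (hρ0 : ∀ x, 0 < ρ x) {f : E → ℝ} (hf : Measurable f) :
    variance (fun x => f x / ρ x) (μ.withDensity fun x => ENNReal.ofReal (ρ x))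
      ≤ ∫ x, f x ^ 2 / ρ x ∂μ := by
  refine (variance_le_expectation_sq (hf.div hρ).aestronglyMeasurable).trans_eq ?_
  rw [integral_withDensity_ofReal hρ fun x => (hρ0 x).le]
  refine integral_congr_ae (ae_of_all _ fun x => ?_)
  have := (hρ0 x).ne'
  simp only [Pi.pow_apply, Pi.div_apply]
  field_simp

end ImportanceWeighting

section OracleEstimator

variable {ι E Ω : Type*} [MeasurableSpace E] [MeasurableSpace Ω] {P : Measure Ω}
  [IsFiniteMeasure P] {μ : Measure E} {𝕊 : Finset ι} {n : ℕ} {nS : ι → ℕ}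
  {X : Fin n → Ω → E} {XS : (S : ι) → Fin (nS S) → Ω → E} {r : ι → E → ℝ} {a : E → ℝ}
  {α : ι → E → ℝ} {c : ℝ}

noncomputable def oracleEstimator (𝕊 : Finset ι) (r : ι → E → ℝ) (a : E → ℝ) (α : ι → E → ℝ)
    (X : Fin n → Ω → E) (XS : (S : ι) → Fin (nS S) → Ω → E) : Ω → ℝ :=
  pooledMean 𝕊 X XS (fun x => a x - ∑ S ∈ 𝕊, α S x) fun S x => α S x / r S x

theorem integral_oracleEstimator [IsFiniteMeasure μ] (hn : n ≠ 0) (hnS : ∀ S ∈ 𝕊, nS S ≠ 0)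
    (hX : ∀ i, Measurable (X i)) (hXS : ∀ S j, Measurable (XS S j))
    (hXlaw : ∀ i, P.map (X i) = μ)
    (hXSlaw : ∀ S ∈ 𝕊, ∀ j, P.map (XS S j) = μ.withDensity fun x => ENNReal.ofReal (r S x))
    (hr : ∀ S ∈ 𝕊, Measurable (r S)) (hc : 0 < c) (hrc : ∀ S ∈ 𝕊, ∀ x, c ≤ r S x)
    (ha : BoundedMeasurable a) (hα : ∀ S ∈ 𝕊, BoundedMeasurable (α S)) :
    ∫ ω, oracleEstimator 𝕊 r a α X XS ω ∂P = ∫ x, a x ∂μ := by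
  rw [oracleEstimator, integral_pooledMean 𝕊 hn hnS hX hXS hXlaw hXSlaw
    (ha.sub (.finset_sum 𝕊 hα)) fun S hS => (hα S hS).div (hr S hS) hc (hrc S hS),
    integral_sub (ha.integrable μ) ((BoundedMeasurable.finset_sum 𝕊 hα).integrable μ),
    integral_finsetSum _ fun S hS => (hα S hS).integrable μ]
  rw [Finset.sum_congr rfl fun S hS => integral_div_withDensity_ofReal (hr S hS)
    (fun x => hc.trans_le (hrc S hS x)) (α S)]
  ring

end OracleEstimator

theorem variance_oracleEstimator_le {d : ℕ} {μ : Measure (Fin d → ℝ)} {𝕊 : Finset (Finset (Fin d))}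
    {lam : Finset (Fin d) → ℝ} {r : Finset (Fin d) → (Fin d → ℝ) → ℝ} {a : (Fin d → ℝ) → ℝ}
    {α : Finset (Fin d) → (Fin d → ℝ) → ℝ} {c : ℝ} {Ω : Type*} [MeasurableSpace Ω]
    {P : Measure Ω} [IsProbabilityMeasure P] {n : ℕ} {nS : Finset (Fin d) → ℕ}
    {X : Fin n → Ω → (Fin d → ℝ)} {XS : (S : Finset (Fin d)) → Fin (nS S) → Ω → (Fin d → ℝ)}
    (h𝕊ne : 𝕊.Nonempty) (hn : n ≠ 0) (hnS : ∀ S ∈ 𝕊, nS S ≠ 0)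
    (hindep : iIndepFun (pooledSample 𝕊 X XS) P)
    (hX : ∀ i, Measurable (X i)) (hXS : ∀ S j, Measurable (XS S j))
    (hXlaw : ∀ i, P.map (X i) = μ)
    (hXSlaw : ∀ S ∈ 𝕊, ∀ j, P.map (XS S j) = μ.withDensity fun x => ENNReal.ofReal (r S x))
    (hlam : ∀ S ∈ 𝕊, 0 < lam S)
    (hr : ∀ S ∈ 𝕊, Measurable (r S)) (hc : 0 < c) (hrc : ∀ S ∈ 𝕊, ∀ x, c ≤ r S x)
    (ha : BoundedMeasurable a) (hα : ∀ S ∈ 𝕊, BoundedMeasurable (α S)) :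
    (n : ℝ) * variance (oracleEstimator 𝕊 r a α X XS) P
      ≤ (1 + 𝕊.sup' h𝕊ne fun S => |(n : ℝ) * lam S / (nS S : ℝ) - 1|) *
          objective μ 𝕊 lam r a α := by
  set D := 𝕊.sup' h𝕊ne fun S => |(n : ℝ) * lam S / (nS S : ℝ) - 1|
  have hleD : ∀ S ∈ 𝕊, |(n : ℝ) * lam S / nS S - 1| ≤ D := fun S hS =>
    Finset.le_sup' (fun S => |(n : ℝ) * lam S / (nS S : ℝ) - 1|) hS
  have hD : 0 ≤ D := (abs_nonneg _).trans (hleD _ h𝕊ne.choose_spec)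
  have hrpos : ∀ S ∈ 𝕊, ∀ x, 0 < r S x := fun S hS x => hc.trans_le (hrc S hS x)
  rw [oracleEstimator, variance_pooledMean 𝕊 hindep hX hXS hXlaw hXSlaw
      (ha.sub (.finset_sum 𝕊 hα)) fun S hS => (hα S hS).div (hr S hS) hc (hrc S hS),
    mul_add, mul_inv_cancel_left₀ (Nat.cast_ne_zero.2 hn), objective, mul_add, Finset.mul_sum,
    Finset.mul_sum]
  gcongr ?_ + ∑ S ∈ 𝕊, ?_ with S hS
  · exact le_mul_of_one_le_left (variance_nonneg _ _) (by linarith)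
  have : IsProbabilityMeasure (μ.withDensity fun x => ENNReal.ofReal (r S x)) := by
    rw [← hXSlaw S hS ⟨0, Nat.pos_of_ne_zero (hnS S hS)⟩]
    exact Measure.isProbabilityMeasure_map (hXS S _).aemeasurable
  have hweight : (n : ℝ) * lam S / nS S ≤ 1 + D :=
    le_add_of_sub_left_le ((le_abs_self _).trans (hleD S hS))
  have hI : ∫ x, α S x ^ 2 / r S x ∂μ = lam S * ∫ x, α S x ^ 2 / (lam S * r S x) ∂μ := by
    rw [← integral_const_mul]
    simp_rw [← mul_div_assoc, mul_div_mul_left _ _ (hlam S hS).ne']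
  calc (n : ℝ) * ((nS S : ℝ)⁻¹ * variance (fun x => α S x / r S x)
          (μ.withDensity fun x => ENNReal.ofReal (r S x)))
      ≤ (n : ℝ) * ((nS S : ℝ)⁻¹ * (lam S * ∫ x, α S x ^ 2 / (lam S * r S x) ∂μ)) := by
        rw [← hI]
        gcongr
        exact variance_div_withDensity_ofReal_le (hr S hS) (hrpos S hS) (hα S hS).1
    _ = (n : ℝ) * lam S / nS S * ∫ x, α S x ^ 2 / (lam S * r S x) ∂μ := by ring
    _ ≤ (1 + D) * ∫ x, α S x ^ 2 / (lam S * r S x) ∂μ := by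
        gcongr
        exact integral_nonneg fun x =>
          div_nonneg (sq_nonneg _) (mul_pos (hlam S hS) (hrpos S hS x)).le

theorem oracle_estimator_unbiased_and_variance_general
    (d : ℕ)
    (μ : Measure (Fin d → ℝ)) [IsProbabilityMeasure μ]
    (𝕊 : Finset (Finset (Fin d))) (h𝕊ne : 𝕊.Nonempty)
    (lam : Finset (Fin d) → ℝ) (hlam : ∀ S ∈ 𝕊, 0 < lam S)
    (r : Finset (Fin d) → (Fin d → ℝ) → ℝ)
    (hrmeas : ∀ S ∈ 𝕊, Measurable (r S))
    (c : ℝ) (hc : 0 < c)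
    (hrc : ∀ S ∈ 𝕊, ∀ x, c ≤ r S x)
    (a : (Fin d → ℝ) → ℝ) (hameas : Measurable a)
    (habd : ∃ Ca, ∀ x, |a x| ≤ Ca)
    -- K S is the conditional law of X given X_S
    (K : Finset (Fin d) → Kernel (Fin d → ℝ) (Fin d → ℝ))
    (hKmarkov : ∀ S ∈ 𝕊, IsMarkovKernel (K S))
    -- the data: X₁,…,X_n i.i.d. ~ f and, independently, X_{S,1},…,X_{S,n_S} i.i.d. ~ r̄_S f_S
    (Ω : Type) [MeasurableSpace Ω] (P : Measure Ω) [IsProbabilityMeasure P]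
    (n : ℕ) (hn : 1 ≤ n) (nS : Finset (Fin d) → ℕ) (hnS : ∀ S ∈ 𝕊, 1 ≤ nS S)
    (X : Fin n → Ω → (Fin d → ℝ)) (hXmeas : ∀ i, Measurable (X i))
    (XS : (S : Finset (Fin d)) → Fin (nS S) → Ω → (Fin d → ℝ))
    (hXSmeas : ∀ S, ∀ j, Measurable (XS S j))
    (hXlaw : ∀ i, Measure.map (X i) P = μ)
    (hXSlaw : ∀ S ∈ 𝕊, ∀ j, Measure.map (XS S j) P
      = μ.withDensity fun x => ENNReal.ofReal (r S x))
    (hIndep : iIndepFun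
      (Sum.elim X (fun p : Σ S : {S : Finset (Fin d) // S ∈ 𝕊}, Fin (nS S.1) =>
        XS p.1.1 p.2)) P)
    (M : ℕ) :
    -- the oracle estimator θ*^{(M)}
    (let θhat : Ω → ℝ := fun ω =>
      (n : ℝ)⁻¹ * ∑ i : Fin n,
          (a (X i ω) - ∑ S ∈ 𝕊, alphaM μ K 𝕊 lam r a M S (X i ω))
        + ∑ S ∈ 𝕊, (nS S : ℝ)⁻¹ *
            ∑ j : Fin (nS S), alphaM μ K 𝕊 lam r a M S (XS S j ω) / r S (XS S j ω)
    (∫ ω, θhat ω ∂P = ∫ x, a x ∂μ) ∧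
      (n : ℝ) * variance θhat P
        ≤ (1 + 𝕊.sup' h𝕊ne fun S => |(n : ℝ) * lam S / (nS S : ℝ) - 1|) *
            objective μ 𝕊 lam r a (alphaM μ K 𝕊 lam r a M)) := by
  intro θhat
  have ha : BoundedMeasurable a := ⟨hameas, habd⟩
  have hα : ∀ S ∈ 𝕊, BoundedMeasurable (alphaM μ K 𝕊 lam r a M S) := fun S _ =>
    alphaM_boundedMeasurable hKmarkov (fun S hS => wgt_boundedMeasurable (hlam S hS).le
      (hrmeas S hS) fun x => hc.le.trans (hrc S hS x)) ha M S
  have hn₀ : n ≠ 0 := Nat.one_le_iff_ne_zero.mp hn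
  have hnS₀ : ∀ S ∈ 𝕊, nS S ≠ 0 := fun S hS => Nat.one_le_iff_ne_zero.mp (hnS S hS)
  exact ⟨integral_oracleEstimator hn₀ hnS₀ hXmeas hXSmeas hXlaw hXSlaw hrmeas hc hrc ha hα,
    variance_oracleEstimator_le h𝕊ne hn₀ hnS₀ hIndep hXmeas hXSmeas hXlaw hXSlaw hlam hrmeas hc
      hrc ha hα⟩

/-- Proposition 7, part 2 (properties of the oracle estimator `θ*^{(M)}`): it is
unbiased for `θ = E[a(X)]`, and `n Var(θ*^{(M)}) ≤ (1 + max_S |nλ_S/n_S − 1|) L(α_𝕊^{(M)})`. -/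
theorem oracle_estimator_unbiased_and_variance
    (d : ℕ) (hd : 2 ≤ d)
    (μ : Measure (Fin d → ℝ)) [IsProbabilityMeasure μ]
    (𝕊 : Finset (Finset (Fin d))) (h𝕊ne : 𝕊.Nonempty)
    (h𝕊proper : ∀ S ∈ 𝕊, S ≠ Finset.univ)
    (lam : Finset (Fin d) → ℝ) (hlam : ∀ S ∈ 𝕊, 0 < lam S)
    (lamMax : ℝ) (hlamMax : ∀ S ∈ 𝕊, lam S ≤ lamMax)
    (r : Finset (Fin d) → (Fin d → ℝ) → ℝ)
    (hrdep : ∀ S ∈ 𝕊, DependsOnCoords S (r S))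
    (hrmeas : ∀ S ∈ 𝕊, Measurable (r S))
    (hrint : ∀ S ∈ 𝕊, ∫ x, r S x ∂μ = 1)
    (c C : ℝ) (hc : 0 < c)
    (hrc : ∀ S ∈ 𝕊, ∀ x, c ≤ r S x) (hrC : ∀ S ∈ 𝕊, ∀ x, r S x ≤ C)
    (a : (Fin d → ℝ) → ℝ) (hameas : Measurable a)
    (habd : ∃ Ca, ∀ x, |a x| ≤ Ca)
    -- K S is the conditional law of X given X_S
    (K : Finset (Fin d) → Kernel (Fin d → ℝ) (Fin d → ℝ))
    (hKmarkov : ∀ S ∈ 𝕊, IsMarkovKernel (K S))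
    (hKdep : ∀ S ∈ 𝕊, ∀ x y : Fin d → ℝ, (∀ i ∈ S, x i = y i) → (K S) x = (K S) y)
    (hKdisint : ∀ S ∈ 𝕊, ∀ g : ({i : Fin d // i ∈ S} → ℝ) → (Fin d → ℝ) → ℝ,
      Measurable (Function.uncurry g) → (∀ p y, |g p y| ≤ 1) →
      ∫ x, (∫ y, g (fun i => x i.1) y ∂((K S) x)) ∂μ = ∫ x, g (fun i => x i.1) x ∂μ)
    -- the data: X₁,…,X_n i.i.d. ~ f and, independently, X_{S,1},…,X_{S,n_S} i.i.d. ~ r̄_S f_S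
    (Ω : Type) [MeasurableSpace Ω] (P : Measure Ω) [IsProbabilityMeasure P]
    (n : ℕ) (hn : 1 ≤ n) (nS : Finset (Fin d) → ℕ) (hnS : ∀ S ∈ 𝕊, 1 ≤ nS S)
    (X : Fin n → Ω → (Fin d → ℝ)) (hXmeas : ∀ i, Measurable (X i))
    (XS : (S : Finset (Fin d)) → Fin (nS S) → Ω → (Fin d → ℝ))
    (hXSmeas : ∀ S, ∀ j, Measurable (XS S j))
    (hXlaw : ∀ i, Measure.map (X i) P = μ)
    (hXSlaw : ∀ S ∈ 𝕊, ∀ j, Measure.map (XS S j) P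
      = μ.withDensity fun x => ENNReal.ofReal (r S x))
    (hIndep : iIndepFun
      (Sum.elim X (fun p : Σ S : {S : Finset (Fin d) // S ∈ 𝕊}, Fin (nS S.1) =>
        XS p.1.1 p.2)) P)
    (M : ℕ) :
    -- the oracle estimator θ*^{(M)}
    (let θhat : Ω → ℝ := fun ω =>
      (n : ℝ)⁻¹ * ∑ i : Fin n,
          (a (X i ω) - ∑ S ∈ 𝕊, alphaM μ K 𝕊 lam r a M S (X i ω))
        + ∑ S ∈ 𝕊, (nS S : ℝ)⁻¹ *
            ∑ j : Fin (nS S), alphaM μ K 𝕊 lam r a M S (XS S j ω) / r S (XS S j ω)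
    (∫ ω, θhat ω ∂P = ∫ x, a x ∂μ) ∧
      (n : ℝ) * variance θhat P
        ≤ (1 + 𝕊.sup' h𝕊ne fun S => |(n : ℝ) * lam S / (nS S : ℝ) - 1|) *
            objective μ 𝕊 lam r a (alphaM μ K 𝕊 lam r a M)) :=
  oracle_estimator_unbiased_and_variance_general d μ 𝕊 h𝕊ne lam hlam r hrmeas c hc hrc a hameas habd
    K hKmarkov Ω P n hn nS hnS X hXmeas XS hXSmeas hXlaw hXSlaw hIndep M
end

section
/- Suppose a is bounded. Then for every M ∈ ℕ and every S ∈ 𝕊, with η = 1/|𝕊| the function α_S^{(M)} = ∑_{m=1}^{M} (−1)^{m−1} ∑_{𝐒 ∈ 𝕊^{(m)} : S_m = S} b_{M,η}(m) ā_𝐒^{(m)} satisfies sup_x | α_S^{(M)}(x) | ≤ 2 ‖a‖_∞ 3^M. -/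
open MeasureTheory ProbabilityTheory

/-! Each `ā^{(m)}` is a weight in `[0, 1]` times the difference of a conditional expectation
and a weighted average of `ā^{(m-1)}`, so `‖ā^{(m)}‖_∞ ≤ 2^m ‖a‖_∞`. There are at most
`|𝕊|^{m-1}` chains of length `m` ending at `S`, and `b_{M,η}(m) ≤ C(M,m) η^m` by the union
bound, so with `η = 1/|𝕊|` the `m`-th summand of `α_S^{(M)}` is at most `C(M,m) 2^m ‖a‖_∞`.
Summing over `m` gives `3^M ‖a‖_∞` by the binomial theorem. -/

theorem bProb_nonneg {M m : ℕ} {η : ℝ} (hη₀ : 0 ≤ η) (hη₁ : η ≤ 1) : 0 ≤ bProb M η m := by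
  have : 0 ≤ 1 - η := by linarith
  exact Finset.sum_nonneg fun _ _ => by positivity

theorem bProb_le_choose_mul_pow {M m : ℕ} (hm : m ≤ M) {η : ℝ} (hη₀ : 0 ≤ η) (hη₁ : η ≤ 1) :
    bProb M η m ≤ M.choose m * η ^ m := by
  have hη₁' : 0 ≤ 1 - η := by linarith
  have hchoose (j : ℕ) : (M.choose (m + j) : ℝ) ≤ M.choose m * (M - m).choose j := by
    have h := Nat.choose_mul (n := M) (k := m + j) (s := m) (by omega)
    rw [Nat.add_sub_cancel_left] at h
    exact_mod_cast h ▸ Nat.le_mul_of_pos_right _ (Nat.choose_pos (by omega))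
  calc bProb M η m
      = ∑ j ∈ Finset.range (M - m + 1),
          (M.choose (m + j) : ℝ) * η ^ (m + j) * (1 - η) ^ (M - m - j) := by
        rw [bProb, ← Finset.Ico_add_one_right_eq_Icc, Finset.sum_Ico_eq_sum_range,
          show M + 1 - m = M - m + 1 by omega]
        simp only [Nat.sub_sub]
    _ ≤ ∑ j ∈ Finset.range (M - m + 1),
          M.choose m * η ^ m * (η ^ j * (1 - η) ^ (M - m - j) * (M - m).choose j) := by
        refine Finset.sum_le_sum fun j _ => ?_
        calc (M.choose (m + j) : ℝ) * η ^ (m + j) * (1 - η) ^ (M - m - j)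
            ≤ M.choose m * (M - m).choose j * η ^ (m + j) * (1 - η) ^ (M - m - j) := by
              gcongr; exact hchoose j
          _ = _ := by ring
    _ = M.choose m * η ^ m * (η + (1 - η)) ^ (M - m) := by rw [← Finset.mul_sum, add_pow]
    _ = M.choose m * η ^ m := by norm_num

theorem sum_Icc_choose_mul_two_pow_le (M : ℕ) :
    ∑ m ∈ Finset.Icc 1 M, (M.choose m : ℝ) * 2 ^ m ≤ 3 ^ M :=
  calc ∑ m ∈ Finset.Icc 1 M, (M.choose m : ℝ) * 2 ^ m
      ≤ ∑ m ∈ Finset.range (M + 1), (M.choose m : ℝ) * 2 ^ m :=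
        Finset.sum_le_sum_of_subset_of_nonneg
          (fun m hm => by simp only [Finset.mem_Icc, Finset.mem_range] at hm ⊢; omega)
          (fun _ _ _ => by positivity)
    _ = 3 ^ M := by rw [show (3 : ℝ) = 2 + 1 by norm_num, add_pow]; simp [mul_comm]

/-- When the total weight vanishes or is not integrable the quotient is `0` by convention, so no
integrability assumption is needed. -/
theorem abs_integral_mul_div_integral_le {α : Type*} [MeasurableSpace α] (μ : Measure α)
    {w g : α → ℝ} {B : ℝ} (hB : 0 ≤ B) (hw : ∀ x, 0 ≤ w x) (hg : ∀ x, |g x| ≤ B) :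
    |(∫ x, w x * g x ∂μ) / ∫ x, w x ∂μ| ≤ B := by
  by_cases hwi : Integrable w μ
  · have hnum : |∫ x, w x * g x ∂μ| ≤ B * ∫ x, w x ∂μ :=
      calc |∫ x, w x * g x ∂μ| ≤ ∫ x, w x * B ∂μ :=
            norm_integral_le_of_norm_le (f := fun x => w x * g x) (hwi.mul_const B)
              (ae_of_all _ fun x => by
              rw [Real.norm_eq_abs, abs_mul, abs_of_nonneg (hw x)]
              exact mul_le_mul_of_nonneg_left (hg x) (hw x))
        _ = B * ∫ x, w x ∂μ := by rw [integral_mul_const, mul_comm]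
    rcases (integral_nonneg (f := w) (μ := μ) hw).eq_or_lt with h₀ | hpos
    · rwa [← h₀, div_zero, abs_zero]
    · rwa [abs_div, abs_of_pos hpos, div_le_iff₀ hpos]
  · rwa [integral_undef hwi, div_zero, abs_zero]

theorem abs_integral_le_of_abs_le {α : Type*} [MeasurableSpace α] (ν : Measure α)
    [IsProbabilityMeasure ν] {g : α → ℝ} {B : ℝ} (hg : ∀ x, |g x| ≤ B) :
    |∫ x, g x ∂ν| ≤ B := by
  simpa using norm_integral_le_of_norm_le_const (μ := ν)
    (ae_of_all _ fun x => (Real.norm_eq_abs _).trans_le (hg x))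

section Chains

variable {d : ℕ} {𝕊 : Finset (Finset (Fin d))} {m : ℕ} {S : Finset (Fin d)}

theorem mem_of_mem_chainsEndAt {Ss : Fin m → Finset (Fin d)} (h : Ss ∈ chainsEndAt 𝕊 m S)
    (j : Fin m) : Ss j ∈ 𝕊 :=
  (Finset.mem_filter.1 h).2.1.1 j

theorem card_chainsEndAt_succ_le (𝕊 : Finset (Finset (Fin d))) (m : ℕ) (S : Finset (Fin d)) :
    (chainsEndAt 𝕊 (m + 1) S).card ≤ 𝕊.card ^ m := by
  have hsub : chainsEndAt 𝕊 (m + 1) S ⊆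
      (Fintype.piFinset fun _ : Fin m => 𝕊).image fun T => Fin.snoc T S := by
    intro Ss hSs
    refine Finset.mem_image.2 ⟨Fin.init Ss,
      Fintype.mem_piFinset.2 fun j => mem_of_mem_chainsEndAt hSs _, ?_⟩
    rw [← (Finset.mem_filter.1 hSs).2.2 (Fin.last m) (by simp)]
    exact Fin.snoc_init_self Ss
  calc (chainsEndAt 𝕊 (m + 1) S).card ≤ _ := Finset.card_le_card hsub
    _ ≤ _ := Finset.card_image_le
    _ = 𝕊.card ^ m := Fintype.card_piFinset_const 𝕊 m

end Chains

section Bounds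

variable {d : ℕ} {μ : Measure (Fin d → ℝ)} {K : Finset (Fin d) → Kernel (Fin d → ℝ) (Fin d → ℝ)}
  {𝕊 : Finset (Finset (Fin d))} {lam : Finset (Fin d) → ℝ} {r : Finset (Fin d) → (Fin d → ℝ) → ℝ}
  {a : (Fin d → ℝ) → ℝ} {A : ℝ}

theorem wgt_nonneg {S : Finset (Fin d)} {x : Fin d → ℝ} (h : 0 ≤ lam S * r S x) :
    0 ≤ wgt lam r S x :=
  div_nonneg h (by linarith)

theorem wgt_le_one {S : Finset (Fin d)} {x : Fin d → ℝ} (h : 0 ≤ lam S * r S x) :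
    wgt lam r S x ≤ 1 :=
  (div_le_one (by linarith)).2 (by linarith)

theorem abs_abarF_le (hlr : ∀ S ∈ 𝕊, ∀ x, 0 ≤ lam S * r S x)
    (hK : ∀ S ∈ 𝕊, IsMarkovKernel (K S)) (hA : ∀ x, |a x| ≤ A) (m : ℕ)
    (Ss : Fin m → Finset (Fin d)) (hSs : ∀ j, Ss j ∈ 𝕊) (x : Fin d → ℝ) :
    |abarF μ K lam r a m Ss x| ≤ 2 ^ m * A := by
  induction m generalizing x with
  | zero => simpa [abarF] using hA x
  | succ m ih =>
    set S := Ss (Fin.last m)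
    set g := abarF μ K lam r a m fun j => Ss j.castSucc
    have hg : ∀ y, |g y| ≤ 2 ^ m * A := ih _ (fun j => hSs _)
    have hB : 0 ≤ 2 ^ m * A := (abs_nonneg _).trans (hg x)
    have := hK S (hSs _)
    have hcond : |∫ y, g y ∂(K S x)| ≤ 2 ^ m * A := abs_integral_le_of_abs_le _ hg
    have hθ : |(∫ y, wgt lam r S y * g y ∂μ) / ∫ y, wgt lam r S y ∂μ| ≤ 2 ^ m * A :=
      abs_integral_mul_div_integral_le μ hB (fun y => wgt_nonneg (hlr S (hSs _) y)) hg
    have hw := hlr S (hSs _) x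
    calc |abarF μ K lam r a (m + 1) Ss x|
        = |wgt lam r S x| * |(∫ y, g y ∂(K S x)) -
            (∫ y, wgt lam r S y * g y ∂μ) / ∫ y, wgt lam r S y ∂μ| := by
          rw [abarF, abs_mul]
      _ ≤ 1 * (2 ^ m * A + 2 ^ m * A) := by
          rw [abs_of_nonneg (wgt_nonneg hw)]
          exact mul_le_mul (wgt_le_one hw) ((abs_sub _ _).trans (add_le_add hcond hθ))
            (abs_nonneg _) zero_le_one
      _ = 2 ^ (m + 1) * A := by ring

theorem abs_alphaM_summand_le {M m : ℕ} {S : Finset (Fin d)} (hS : S ∈ 𝕊)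
    (hlr : ∀ S ∈ 𝕊, ∀ x, 0 ≤ lam S * r S x) (hK : ∀ S ∈ 𝕊, IsMarkovKernel (K S))
    (hA : ∀ x, |a x| ≤ A) (hm : 1 ≤ m) (hmM : m ≤ M) (x : Fin d → ℝ) :
    |(-1 : ℝ) ^ (m - 1) * bProb M ((𝕊.card : ℝ))⁻¹ m *
        ∑ Ss ∈ chainsEndAt 𝕊 m S, abarF μ K lam r a m Ss x| ≤ M.choose m * 2 ^ m * A := by
  obtain ⟨n, rfl⟩ : ∃ n, m = n + 1 := ⟨m - 1, by omega⟩
  set k : ℝ := (𝕊.card : ℝ) with hk_def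
  have hk : 1 ≤ k := Nat.one_le_cast.2 (Finset.card_pos.2 ⟨S, hS⟩)
  have hk₀ : k ≠ 0 := by positivity
  have hη₀ : 0 ≤ k⁻¹ := by positivity
  have hη₁ : k⁻¹ ≤ 1 := inv_le_one_of_one_le₀ hk
  have hA₀ : 0 ≤ A := (abs_nonneg _).trans (hA x)
  have hsum : |∑ Ss ∈ chainsEndAt 𝕊 (n + 1) S, abarF μ K lam r a (n + 1) Ss x|
      ≤ k ^ n * (2 ^ (n + 1) * A) := by
    refine (Finset.abs_sum_le_sum_abs _ _).trans <|
      (Finset.sum_le_card_nsmul _ _ _ fun Ss hSs =>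
        abs_abarF_le hlr hK hA _ Ss (mem_of_mem_chainsEndAt hSs) x).trans ?_
    rw [nsmul_eq_mul]
    gcongr
    rw [hk_def]
    exact_mod_cast card_chainsEndAt_succ_le 𝕊 n S
  calc _ = bProb M k⁻¹ (n + 1) *
        |∑ Ss ∈ chainsEndAt 𝕊 (n + 1) S, abarF μ K lam r a (n + 1) Ss x| := by
        rw [abs_mul, abs_mul, abs_pow, abs_neg, abs_one, one_pow, one_mul,
          abs_of_nonneg (bProb_nonneg hη₀ hη₁)]
    _ ≤ M.choose (n + 1) * k⁻¹ ^ (n + 1) * (k ^ n * (2 ^ (n + 1) * A)) :=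
        mul_le_mul (bProb_le_choose_mul_pow hmM hη₀ hη₁) hsum (abs_nonneg _) (by positivity)
    _ = k⁻¹ * (M.choose (n + 1) * 2 ^ (n + 1) * A) := by
        rw [inv_pow, pow_succ]
        field_simp
    _ ≤ M.choose (n + 1) * 2 ^ (n + 1) * A := mul_le_of_le_one_left (by positivity) hη₁

theorem abs_alphaM_le {M : ℕ} {S : Finset (Fin d)} (hS : S ∈ 𝕊)
    (hlr : ∀ S ∈ 𝕊, ∀ x, 0 ≤ lam S * r S x) (hK : ∀ S ∈ 𝕊, IsMarkovKernel (K S))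
    (hA : ∀ x, |a x| ≤ A) (x : Fin d → ℝ) :
    |alphaM μ K 𝕊 lam r a M S x| ≤ 3 ^ M * A := by
  have hA₀ : 0 ≤ A := (abs_nonneg _).trans (hA x)
  calc |alphaM μ K 𝕊 lam r a M S x|
      ≤ ∑ m ∈ Finset.Icc 1 M, M.choose m * 2 ^ m * A := by
        refine (Finset.abs_sum_le_sum_abs _ _).trans (Finset.sum_le_sum fun m hm => ?_)
        obtain ⟨hm₁, hmM⟩ := Finset.mem_Icc.1 hm
        exact abs_alphaM_summand_le hS hlr hK hA hm₁ hmM x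
    _ ≤ 3 ^ M * A := by
        rw [← Finset.sum_mul]
        exact mul_le_mul_of_nonneg_right (sum_Icc_choose_mul_two_pow_le M) hA₀

end Bounds

theorem alphaM_uniform_bound_general
    (d : ℕ)
    (μ : Measure (Fin d → ℝ))
    (𝕊 : Finset (Finset (Fin d)))
    (lam : Finset (Fin d) → ℝ) (hlam : ∀ S ∈ 𝕊, 0 < lam S)
    (r : Finset (Fin d) → (Fin d → ℝ) → ℝ)
    (hrpos : ∀ S ∈ 𝕊, ∀ x, 0 < r S x)
    (a : (Fin d → ℝ) → ℝ)
    (habd : ∃ Ca, ∀ x, |a x| ≤ Ca)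
    -- K S is the conditional law of X given X_S
    (K : Finset (Fin d) → Kernel (Fin d → ℝ) (Fin d → ℝ))
    (hKmarkov : ∀ S ∈ 𝕊, IsMarkovKernel (K S)) :
    ∀ M : ℕ, 1 ≤ M → ∀ S ∈ 𝕊, ∀ x : Fin d → ℝ,
      |alphaM μ K 𝕊 lam r a M S x| ≤ 2 * (⨆ y, |a y|) * 3 ^ M := by
  intro M _ S hS x
  obtain ⟨Ca, hCa⟩ := habd
  have hA : ∀ y, |a y| ≤ ⨆ y, |a y| := le_ciSup ⟨Ca, Set.forall_mem_range.2 hCa⟩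
  have hA₀ : 0 ≤ ⨆ y, |a y| := (abs_nonneg _).trans (hA x)
  have hlr : ∀ S ∈ 𝕊, ∀ x, 0 ≤ lam S * r S x :=
    fun S hS x => (mul_pos (hlam S hS) (hrpos S hS x)).le
  calc |alphaM μ K 𝕊 lam r a M S x| ≤ 3 ^ M * ⨆ y, |a y| := abs_alphaM_le hS hlr hKmarkov hA x
    _ ≤ 2 * (⨆ y, |a y|) * 3 ^ M := by nlinarith [pow_nonneg (by norm_num : (0 : ℝ) ≤ 3) M]

/-- The uniform bound `‖α_S^{(M)}‖_∞ ≤ 2 ‖a‖_∞ 3^M` on the approximate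
influence-function components, with step size `η = 1/|𝕊|`. -/
theorem alphaM_uniform_bound
    (d : ℕ) (hd : 2 ≤ d)
    (μ : Measure (Fin d → ℝ)) [IsProbabilityMeasure μ]
    (𝕊 : Finset (Finset (Fin d))) (h𝕊ne : 𝕊.Nonempty)
    (h𝕊proper : ∀ S ∈ 𝕊, S ≠ Finset.univ)
    (lam : Finset (Fin d) → ℝ) (hlam : ∀ S ∈ 𝕊, 0 < lam S)
    (r : Finset (Fin d) → (Fin d → ℝ) → ℝ)
    (hrpos : ∀ S ∈ 𝕊, ∀ x, 0 < r S x)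
    (hrdep : ∀ S ∈ 𝕊, DependsOnCoords S (r S))
    (hrmeas : ∀ S ∈ 𝕊, Measurable (r S))
    (hrint : ∀ S ∈ 𝕊, ∫ x, r S x ∂μ = 1)
    (a : (Fin d → ℝ) → ℝ) (hameas : Measurable a)
    (habd : ∃ Ca, ∀ x, |a x| ≤ Ca)
    -- K S is the conditional law of X given X_S
    (K : Finset (Fin d) → Kernel (Fin d → ℝ) (Fin d → ℝ))
    (hKmarkov : ∀ S ∈ 𝕊, IsMarkovKernel (K S))
    (hKdep : ∀ S ∈ 𝕊, ∀ x y : Fin d → ℝ, (∀ i ∈ S, x i = y i) → (K S) x = (K S) y)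
    (hKdisint : ∀ S ∈ 𝕊, ∀ g : ({i : Fin d // i ∈ S} → ℝ) → (Fin d → ℝ) → ℝ,
      Measurable (Function.uncurry g) → (∀ p y, |g p y| ≤ 1) →
      ∫ x, (∫ y, g (fun i => x i.1) y ∂((K S) x)) ∂μ = ∫ x, g (fun i => x i.1) x ∂μ) :
    ∀ M : ℕ, 1 ≤ M → ∀ S ∈ 𝕊, ∀ x : Fin d → ℝ,
      |alphaM μ K 𝕊 lam r a M S x| ≤ 2 * (⨆ y, |a y|) * 3 ^ M :=
  alphaM_uniform_bound_general d μ 𝕊 lam hlam r hrpos a habd K hKmarkov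
end
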